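/- If {G_i}_{i∈I} is a family of groups such that the abelianization Ab(G_j) is not cotorsion for some j ∈ I, then the free product *_{i∈I} G_i is not Higman-complete. -/

import Mathlib

universe u

/-- Evaluation of a word in two variables at `x` and `y` in a group. -/
def wordEval {G : Type*} [Group G] (w : FreeGroup Bool) (x y : G) : G :=
  FreeGroup.lift (fun b => if b then y else x) w

/-- A group `G` is Higman-complete if all systems `hᵢ = wᵢ(fᵢ, hᵢ₊₁)` are solvable. -/
def IsHigmanComplete (G : Type*) [Group G] : Prop :=
  ∀ (f : ℕ → G) (w : ℕ → FreeGroup Bool),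
    ∃ h : ℕ → G, ∀ i, h i = wordEval (w i) (f i) (h (i + 1))

/-- An abelian group `A` is cotorsion: every extension of `A` by a torsion-free
abelian group splits. -/
def IsCotorsion (A : Type u) [AddCommGroup A] : Prop :=
  ∀ (B : Type u) [AddCommGroup B] (i : A →+ B), Function.Injective i →
    (∀ g : B ⧸ i.range, g ≠ 0 → ¬IsOfFinAddOrder g) →
    ∃ r : B →+ A, r.comp i = AddMonoidHom.id A

open Function AddSubgroup

/-!
The free product retracts onto `G j`, which maps onto its abelianization, and Higman-completeness
passes to quotients. In an abelian Higman-complete group `A` (written additively) the words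
`x y ^ cᵢ` make every system `zᵢ = aᵢ + cᵢ • zᵢ₊₁` solvable, and such an `A` is cotorsion.

For the last step, let `A ≤ B` with `B ⧸ A` torsion-free and use Zorn's lemma to get a maximal
homomorphism `r : D → A` extending the identity of `A`, where `A ≤ D ≤ B` and `B ⧸ D` is
torsion-free. If some `b ∉ D`, the elements of `B ⧸ D` with a nonzero multiple in `ℤ ∙ (b + D)`
form a countable rank-one group, hence a union of cyclic groups `ℤ ∙ g₀ ≤ ℤ ∙ g₁ ≤ ⋯` with
`g₀ = b + D` and `gₙ = cₙ • gₙ₊₁`. Lift the `gₙ` to `xₙ ∈ B` and solve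
`zₙ = r (xₙ - cₙ • xₙ₊₁) + cₙ • zₙ₊₁`: setting `r xₙ := zₙ` extends `r` to the preimage of that
group, contradicting maximality.
-/

def ChainSystemsSolvable (A : Type*) [AddCommGroup A] : Prop :=
  ∀ (a : ℕ → A) (c : ℕ → ℤ), ∃ z : ℕ → A, ∀ i, z i = a i + c i • z (i + 1)

theorem MonoidHom.map_wordEval {G H : Type*} [Group G] [Group H] (φ : G →* H)
    (w : FreeGroup Bool) (x y : G) : φ (wordEval w x y) = wordEval w (φ x) (φ y) := by
  simp only [wordEval, ← MonoidHom.comp_apply]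
  congr 1
  ext b
  cases b <;> simp

theorem IsHigmanComplete.of_surjective {G H : Type*} [Group G] [Group H] (hG : IsHigmanComplete G)
    {φ : G →* H} (hφ : Surjective φ) : IsHigmanComplete H := by
  intro f w
  choose f' hf' using fun i => hφ (f i)
  obtain ⟨h, hh⟩ := hG f' w
  exact ⟨fun i => φ (h i), fun i => by dsimp only; rw [hh i, φ.map_wordEval, hf']⟩

theorem IsHigmanComplete.chainSystemsSolvable {M : Type*} [CommGroup M] (hM : IsHigmanComplete M) :
    ChainSystemsSolvable (Additive M) := by
  intro a c
  obtain ⟨z, hz⟩ := hM (fun i => (a i).toMul) fun i => .of false * .of true ^ c i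
  refine ⟨fun i => .ofMul (z i), fun i => ?_⟩
  dsimp only
  rw [hz i]
  simp [wordEval]

section TorsionFree

variable {C : Type*} [AddCommGroup C]

theorem exists_zmultiples_chain_of_countable {R : Set C} (hR : R.Countable) {β : C} (hβ : β ∈ R)
    (hpair : ∀ x ∈ R, ∀ y ∈ R, ∃ z ∈ R, x ∈ zmultiples z ∧ y ∈ zmultiples z) :
    ∃ g : ℕ → C, g 0 = β ∧ (∀ n, g n ∈ R) ∧ (∀ n, g n ∈ zmultiples (g (n + 1))) ∧
      ∀ x ∈ R, ∃ n, x ∈ zmultiples (g n) := by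
  obtain ⟨e, rfl⟩ := hR.exists_eq_range ⟨β, hβ⟩
  obtain ⟨i₀, rfl⟩ := hβ
  have : ∀ m n, ∃ k, e m ∈ zmultiples (e k) ∧ e n ∈ zmultiples (e k) := fun m n => by
    obtain ⟨_, ⟨k, rfl⟩, h⟩ := hpair (e m) ⟨m, rfl⟩ (e n) ⟨n, rfl⟩
    exact ⟨k, h⟩
  choose k hk using this
  let idx : ℕ → ℕ := fun n => Nat.rec i₀ (fun n i => k i n) n
  refine ⟨e ∘ idx, rfl, fun n => ⟨idx n, rfl⟩, fun n => (hk (idx n) n).1, ?_⟩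
  rintro _ ⟨n, rfl⟩
  exact ⟨n + 1, (hk (idx n) n).2⟩

variable [IsAddTorsionFree C]

theorem mem_zmultiples_of_nsmul_mem_zmultiples_nsmul {N : ℕ} (hN : N ≠ 0) {x z : C}
    (h : N • x ∈ zmultiples (N • z)) : x ∈ zmultiples z := by
  obtain ⟨k, hk⟩ := mem_zmultiples_iff.mp h
  exact mem_zmultiples_iff.mpr
    ⟨k, nsmul_right_injective hN (by simpa only [smul_comm N k z] using hk)⟩

theorem exists_zmultiples_of_nsmul_mem_zmultiples {β x y : C} {m n : ℕ} (hm : m ≠ 0) (hn : n ≠ 0)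
    (hx : m • x ∈ zmultiples β) (hy : n • y ∈ zmultiples β) :
    ∃ z, (m * n) • z ∈ zmultiples β ∧ x ∈ zmultiples z ∧ y ∈ zmultiples z := by
  obtain ⟨p, hp⟩ := mem_zmultiples_iff.mp hx
  obtain ⟨q, hq⟩ := mem_zmultiples_iff.mp hy
  set a : ℤ := n * p
  set b : ℤ := m * q
  set d : ℤ := (Int.gcd a b : ℤ)
  have hxa : (m * n) • x = a • β := by
    rw [mul_nsmul, ← hp, ← natCast_zsmul, smul_smul]
  have hyb : (m * n) • y = b • β := by
    rw [mul_comm, mul_nsmul, ← hq, ← natCast_zsmul, smul_smul]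
  -- By Bézout, `z` generates `ℤ ∙ x + ℤ ∙ y`.
  set z := a.gcdA b • x + a.gcdB b • y
  have hz : (m * n) • z = d • β := by
    rw [show d = a * a.gcdA b + b * a.gcdB b from Int.gcd_eq_gcd_ab a b, smul_add,
      smul_comm _ (a.gcdA b), smul_comm _ (a.gcdB b), hxa, hyb, smul_smul, smul_smul, ← add_smul,
      mul_comm a, mul_comm b]
  have hmn : m * n ≠ 0 := mul_ne_zero hm hn
  refine ⟨z, hz ▸ zsmul_mem_zmultiples β d, ?_, ?_⟩
  · refine mem_zmultiples_of_nsmul_mem_zmultiples_nsmul hmn (mem_zmultiples_iff.mpr ⟨a / d, ?_⟩)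
    rw [hz, smul_smul, Int.ediv_mul_cancel (Int.gcd_dvd_left a b), hxa]
  · refine mem_zmultiples_of_nsmul_mem_zmultiples_nsmul hmn (mem_zmultiples_iff.mpr ⟨b / d, ?_⟩)
    rw [hz, smul_smul, Int.ediv_mul_cancel (Int.gcd_dvd_right a b), hyb]

theorem countable_setOf_nsmul_mem_zmultiples (β : C) :
    {x : C | ∃ n : ℕ, n ≠ 0 ∧ n • x ∈ zmultiples β}.Countable := by
  have : {x : C | ∃ n : ℕ, n ≠ 0 ∧ n • x ∈ zmultiples β} =
      ⋃ n : {n : ℕ // n ≠ 0}, (n.1 • ·) ⁻¹' (zmultiples β : Set C) := by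
    ext x; simp
  rw [this]
  exact Set.countable_iUnion fun n =>
    (Set.countable_range (· • β : ℤ → C)).preimage (nsmul_right_injective n.2)

theorem exists_saturated_zmultiples_chain {β : C} (hβ : β ≠ 0) :
    ∃ g : ℕ → C, g 0 = β ∧ (∀ n, g n ∈ zmultiples (g (n + 1))) ∧ (∀ n, g n ≠ 0) ∧
      ∀ (m : ℕ) (x : C) (n : ℕ), m ≠ 0 → m • x ∈ zmultiples (g n) →
        ∃ n', x ∈ zmultiples (g n') := by
  set R := {x : C | ∃ n : ℕ, n ≠ 0 ∧ n • x ∈ zmultiples β}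
  have hβR : β ∈ R := ⟨1, one_ne_zero, by simp [mem_zmultiples]⟩
  have hpair : ∀ x ∈ R, ∀ y ∈ R, ∃ z ∈ R, x ∈ zmultiples z ∧ y ∈ zmultiples z := by
    rintro x ⟨m, hm, hx⟩ y ⟨n, hn, hy⟩
    obtain ⟨z, hz, hxz, hyz⟩ := exists_zmultiples_of_nsmul_mem_zmultiples hm hn hx hy
    exact ⟨z, ⟨m * n, mul_ne_zero hm hn, hz⟩, hxz, hyz⟩
  obtain ⟨g, hg0, hgR, hg, hcover⟩ :=
    exists_zmultiples_chain_of_countable (countable_setOf_nsmul_mem_zmultiples β) hβR hpair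
  have hmono : Monotone fun n => zmultiples (g n) :=
    monotone_nat_of_le_succ fun n => zmultiples_le.mpr (hg n)
  refine ⟨g, hg0, hg, fun n hgn => hβ ?_, fun m x n hm hx => hcover x ?_⟩
  · simpa [hg0, hgn] using hmono (Nat.zero_le n) (mem_zmultiples (g 0))
  obtain ⟨m', hm', hgn⟩ := hgR n
  obtain ⟨k, hk⟩ := mem_zmultiples_iff.mp hx
  refine ⟨m * m', mul_ne_zero hm hm', ?_⟩
  rw [mul_nsmul, ← hk, smul_comm]
  exact zsmul_mem hgn k

end TorsionFree

theorem QuotientAddGroup.isAddTorsionFree_iff_nsmulSaturated {B : Type*} [AddCommGroup B]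
    {D : AddSubgroup B} : IsAddTorsionFree (B ⧸ D) ↔ D.NSMulSaturated := by
  refine ⟨fun _ => by simpa using AddSubmonoid.ker_saturated (QuotientAddGroup.mk' D),
    fun hD => IsAddTorsionFree.of_not_isOfFinAddOrder fun x hx hfin => hx ?_⟩
  obtain ⟨n, hn, hnx⟩ := isOfFinAddOrder_iff_nsmul_eq_zero.mp hfin
  induction x using QuotientAddGroup.induction_on with
  | H x =>
    rw [← QuotientAddGroup.mk_nsmul, QuotientAddGroup.eq_zero_iff] at hnx
    exact (QuotientAddGroup.eq_zero_iff x).mpr ((hD hnx).resolve_left hn.ne')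

section Graph

theorem AddSubgroup.mem_iSup_sup_zmultiples {E : Type*} [AddCommGroup E] {S : AddSubgroup E}
    {p : ℕ → E} (hp : ∀ n, p n ∈ S ⊔ zmultiples (p (n + 1))) {w : E} :
    w ∈ ⨆ n, S ⊔ zmultiples (p n) ↔ ∃ n, ∃ k : ℤ, w - k • p n ∈ S := by
  have hmono : Monotone fun n => S ⊔ zmultiples (p n) :=
    monotone_nat_of_le_succ fun n => sup_le le_sup_left (zmultiples_le.mpr (hp n))
  rw [mem_iSup_of_directed hmono.directed_le]
  refine exists_congr fun n => ⟨?_, fun ⟨k, hk⟩ => ?_⟩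
  · intro hw
    obtain ⟨s, hs, _, ⟨k, rfl⟩, rfl⟩ := mem_sup.mp hw
    exact ⟨k, by simpa using hs⟩
  · exact mem_sup.mpr ⟨_, hk, k • p n, zsmul_mem_zmultiples _ _, sub_add_cancel _ _⟩

variable {A B : Type*} [AddCommGroup A] [AddCommGroup B]

theorem AddSubgroup.mem_map_fst {S : AddSubgroup (B × A)} {x : B} :
    x ∈ S.map (AddMonoidHom.fst B A) ↔ ∃ a, (x, a) ∈ S := by
  simp [mem_map]

/-- `S ≤ B × A` is the graph of a homomorphism into `A` from a saturated subgroup of `B`. -/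
structure IsSaturatedGraph (S : AddSubgroup (B × A)) : Prop where
  eq_zero_of_mem : ∀ a : A, ((0 : B), a) ∈ S → a = 0
  nsmulSaturated : (S.map (AddMonoidHom.fst B A)).NSMulSaturated

theorem IsSaturatedGraph.eq_of_mem {S : AddSubgroup (B × A)} (hS : IsSaturatedGraph S) {x : B}
    {a a' : A} (ha : (x, a) ∈ S) (ha' : (x, a') ∈ S) : a = a' :=
  sub_eq_zero.mp (hS.eq_zero_of_mem _ (by simpa using S.sub_mem ha ha'))

theorem isSaturatedGraph_sSup {c : Set (AddSubgroup (B × A))} (hne : c.Nonempty)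
    (hc : DirectedOn (· ≤ ·) c) (h : ∀ S ∈ c, IsSaturatedGraph S) : IsSaturatedGraph (sSup c) := by
  have hmem := fun w => mem_sSup_of_directedOn hne hc (x := w)
  refine ⟨fun a ha => ?_, fun n x hx => ?_⟩
  · obtain ⟨S, hSc, ha⟩ := (hmem _).mp ha
    exact (h S hSc).eq_zero_of_mem a ha
  · obtain ⟨a, ha⟩ := mem_map_fst.mp hx
    obtain ⟨S, hSc, ha⟩ := (hmem _).mp ha
    refine ((h S hSc).nsmulSaturated (mem_map_fst.mpr ⟨a, ha⟩)).imp_right fun hx => ?_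
    obtain ⟨a', ha'⟩ := mem_map_fst.mp hx
    exact mem_map_fst.mpr ⟨a', le_sSup hSc ha'⟩

theorem ChainSystemsSolvable.exists_lift (hA : ChainSystemsSolvable A) (S : AddSubgroup (B × A))
    {g : ℕ → B ⧸ S.map (AddMonoidHom.fst B A)} (hg : ∀ n, g n ∈ zmultiples (g (n + 1))) :
    ∃ p : ℕ → B × A, (∀ n, ((p n).1 : B ⧸ S.map (AddMonoidHom.fst B A)) = g n) ∧
      ∀ n, p n ∈ S ⊔ zmultiples (p (n + 1)) := by
  choose c hc using fun n => mem_zmultiples_iff.mp (hg n)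
  choose x hx using fun n => QuotientAddGroup.mk_surjective (g n)
  have hxD : ∀ n, x n - c n • x (n + 1) ∈ S.map (AddMonoidHom.fst B A) := fun n => by
    rw [← QuotientAddGroup.eq_iff_sub_mem, QuotientAddGroup.mk_zsmul, hx, hx, hc]
  choose a ha using fun n => mem_map_fst.mp (hxD n)
  obtain ⟨z, hz⟩ := hA a c
  refine ⟨fun n => (x n, z n), hx, fun n =>
    mem_sup.mpr ⟨_, ha n, _, zsmul_mem_zmultiples _ (c n), ?_⟩⟩
  ext
  · simp
  · simp [hz n]

theorem IsSaturatedGraph.exists_extension (hA : ChainSystemsSolvable A) {S : AddSubgroup (B × A)}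
    (hS : IsSaturatedGraph S) {b : B} (hb : b ∉ S.map (AddMonoidHom.fst B A)) :
    ∃ S', S ≤ S' ∧ IsSaturatedGraph S' ∧ ∃ a, (b, a) ∈ S' := by
  set D := S.map (AddMonoidHom.fst B A)
  have : IsAddTorsionFree (B ⧸ D) :=
    QuotientAddGroup.isAddTorsionFree_iff_nsmulSaturated.mpr hS.nsmulSaturated
  obtain ⟨g, hg0, hg, hgne, hsat⟩ := exists_saturated_zmultiples_chain
    (mt (QuotientAddGroup.eq_zero_iff b).mp hb)
  obtain ⟨p, hpg, hp⟩ := hA.exists_lift S hg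
  have hmem := fun w => mem_iSup_sup_zmultiples hp (w := w)
  have hD : ∀ y n (k : ℤ), y - k • (p n).1 ∈ D ↔ (y : B ⧸ D) = k • g n := fun y n k => by
    rw [← hpg, ← QuotientAddGroup.mk_zsmul, QuotientAddGroup.eq_iff_sub_mem]
  have hcover : ∀ (y : B) n, (y : B ⧸ D) ∈ zmultiples (g n) →
      ∃ a, (y, a) ∈ ⨆ n, S ⊔ zmultiples (p n) := fun y n hy => by
    obtain ⟨k, hk⟩ := mem_zmultiples_iff.mp hy
    obtain ⟨a, ha⟩ := mem_map_fst.mp ((hD y n k).mpr hk.symm)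
    refine ⟨a + k • (p n).2, (hmem _).mpr ⟨n, k, ?_⟩⟩
    convert ha using 1
    ext <;> simp
  refine ⟨⨆ n, S ⊔ zmultiples (p n), le_iSup_of_le 0 le_sup_left,
    ⟨fun a ha => ?_, fun m x hx => ?_⟩, hcover b 0 (hg0 ▸ mem_zmultiples _)⟩
  · obtain ⟨n, k, hk⟩ := (hmem _).mp ha
    have hk0 : k • g n = 0 := by
      simpa using ((hD 0 n k).mp (mem_map_of_mem (AddMonoidHom.fst B A) hk)).symm
    rw [IsAddTorsionFree.zsmul_eq_zero_iff_left (hgne n)] at hk0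
    exact hS.eq_zero_of_mem a (by simpa [hk0] using hk)
  · obtain ⟨a, ha⟩ := mem_map_fst.mp hx
    obtain ⟨n, k, hk⟩ := (hmem _).mp ha
    have hxn : m • (x : B ⧸ D) ∈ zmultiples (g n) := mem_zmultiples_iff.mpr
      ⟨k, ((hD _ n k).mp (mem_map_of_mem (AddMonoidHom.fst B A) hk)).symm⟩
    refine (eq_or_ne m 0).imp id fun hm => ?_
    obtain ⟨n', hn'⟩ := hsat m x n hm hxn
    exact mem_map_fst.mpr (hcover x n' hn')

end Graph

theorem ChainSystemsSolvable.isCotorsion {A : Type u} [AddCommGroup A]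
    (hA : ChainSystemsSolvable A) : IsCotorsion A := by
  intro B _ i hi htf
  have hgraph : IsSaturatedGraph (i.prod (AddMonoidHom.id A)).range := by
    refine ⟨fun a ⟨a', ha'⟩ => ?_, ?_⟩
    · obtain ⟨hia', rfl⟩ := Prod.mk.inj ha'
      exact hi (by simpa using hia')
    · rw [AddMonoidHom.map_range, AddMonoidHom.fst_comp_prod,
        ← QuotientAddGroup.isAddTorsionFree_iff_nsmulSaturated]
      exact IsAddTorsionFree.of_not_isOfFinAddOrder htf
  obtain ⟨S, hiS, hmax⟩ := zorn_le_nonempty₀ {S | IsSaturatedGraph S}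
    (fun c hc hchain T hT => ⟨sSup c, isSaturatedGraph_sSup ⟨T, hT⟩ hchain.directedOn hc,
      fun _ => le_sSup⟩) _ hgraph
  have htot : ∀ b, ∃ a, (b, a) ∈ S := fun b => by
    by_contra hb
    obtain ⟨S', hSS', hS', a, ha⟩ := hmax.prop.exists_extension hA (mt mem_map_fst.mp hb)
    exact hb ⟨a, hmax.2 hS' hSS' ha⟩
  obtain ⟨r, hr⟩ := AddMonoidHom.exists_range_eq_graph (f := S.subtype)
    (fun b => (htot b).elim fun a ha => ⟨⟨_, ha⟩, rfl⟩)
    (fun s t hst => hmax.prop.eq_of_mem s.2 (hst ▸ t.2))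
  rw [range_subtype] at hr
  exact ⟨r, AddMonoidHom.ext fun a => (hr ▸ hiS ⟨a, rfl⟩ : (i a, a) ∈ r.graph)⟩

/-- If `Ab(G j)` is not cotorsion for some `j`, then the free product `*_{i} G i`
is not Higman-complete. -/
theorem freeProduct_not_higmanComplete {I : Type} (G : I → Type) [∀ i, Group (G i)]
    (j : I) (h : ¬ IsCotorsion (Additive (Abelianization (G j)))) :
    ¬ IsHigmanComplete (Monoid.CoprodI G) := by
  classical
  intro hG
  have hGj : IsHigmanComplete (G j) :=
    hG.of_surjective (Monoid.CoprodI.of_leftInverse j).surjective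
  have hab : IsHigmanComplete (Abelianization (G j)) :=
    hGj.of_surjective (QuotientGroup.mk'_surjective _)
  exact h hab.chainSystemsSolvable.isCotorsion
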